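/- Suppose f : ℝ^d → ℝ is L_f-smooth, h : ℝ^d → ℝ is L_h-smooth, g : ℝ^d → ℝ ∪ {+∞} is proper, lower semicontinuous and ρ-weakly convex, and let γ ∈ (0, min{1/ρ, 1/L_f}) and λ > 0. For x ∈ ℝ^d let Y_γ(x) be the unique minimizer over y ∈ ℝ^d of g(y) + (1/(2γ))‖y − (x − γ∇(f+h)(x))‖², and T_γ(x) the unique minimizer over u ∈ ℝ^d of f(u) + (1/(2γ))‖u − ((1 − λ)x + γ∇f(x) + λY_γ(x))‖². Set L₁ := 1 + (1 + γ(L_f + L_h))/(1 − γρ) and L₂ := (1 + γL_f + λL₁)·max{1, γL_f/(1 − γL_f)} + λL₁ + γL_f. Then the map x ↦ x − T_γ(x) is Lipschitz continuous on ℝ^d with constant L₂. -/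

import Mathlib

/-!
`Y` is the proximal point of the `ρ`-weakly convex `g` at a forward gradient step. Minimality of a
proximal point is strengthened by the `(1/γ - ρ)`-strong convexity of the proximal objective, which
makes the proximal map `(1 - γρ)⁻¹`-Lipschitz in its base point, so `x ↦ x - Y x` is
`L₁`-Lipschitz. The `L_f`-smooth `f` is `L_f`-weakly convex, so `T` is Lipschitz in the same way,
and the optimality condition of `T x` rewrites `x - T x` as
`λ (x - Y x) - γ (∇f x - ∇f (T x))`, whose three terms are bounded separately.
-/

open scoped RealInnerProductSpace

/-- `g` is `ρ`-weakly convex: `g + (ρ/2)‖·‖²` is convex (extended-real-valued version). -/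
def WeaklyConvexE {E : Type*} [NormedAddCommGroup E] [InnerProductSpace ℝ E]
    (ρ : ℝ) (g : E → EReal) : Prop :=
  ∀ x y : E, ∀ t : ℝ, 0 ≤ t → t ≤ 1 →
    g (t • x + (1 - t) • y) + (((ρ / 2) * ‖t • x + (1 - t) • y‖ ^ 2 : ℝ) : EReal) ≤
      (t : EReal) * (g x + (((ρ / 2) * ‖x‖ ^ 2 : ℝ) : EReal)) +
        ((1 - t : ℝ) : EReal) * (g y + (((ρ / 2) * ‖y‖ ^ 2 : ℝ) : EReal))

section

variable {E : Type*} [NormedAddCommGroup E] {γ : ℝ} {g : E → EReal} {w p : E}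

def IsProxPoint (g : E → EReal) (γ : ℝ) (w p : E) : Prop :=
  ∀ u, g p + ((1 / (2 * γ) * ‖p - w‖ ^ 2 : ℝ) : EReal)
    ≤ g u + ((1 / (2 * γ) * ‖u - w‖ ^ 2 : ℝ) : EReal)

theorem isProxPoint_coe_iff {f : E → ℝ} :
    IsProxPoint (fun u => (f u : EReal)) γ w p
      ↔ ∀ u, f p + 1 / (2 * γ) * ‖p - w‖ ^ 2 ≤ f u + 1 / (2 * γ) * ‖u - w‖ ^ 2 := by
  simp only [IsProxPoint, ← EReal.coe_add, EReal.coe_le_coe_iff]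

theorem IsProxPoint.exists_eq_coe (hbot : ∀ x, g x ≠ ⊥) (hdom : ∃ x, g x ≠ ⊤)
    (hp : IsProxPoint g γ w p) : ∃ a : ℝ, g p = a := by
  obtain ⟨x₀, hx₀⟩ := hdom
  have hfin : g p + ((1 / (2 * γ) * ‖p - w‖ ^ 2 : ℝ) : EReal) ≠ ⊤ :=
    ne_top_of_le_ne_top (EReal.add_ne_top hx₀ (EReal.coe_ne_top _)) (hp x₀)
  rw [EReal.add_ne_top_iff_ne_top_left (EReal.coe_ne_bot _) (EReal.coe_ne_top _)] at hfin
  exact ⟨(g p).toReal, (EReal.coe_toReal hfin (hbot p)).symm⟩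

end

section

variable {E : Type*} [NormedAddCommGroup E] [InnerProductSpace ℝ E]
variable {ρ γ a b : ℝ} {g : E → EReal}

theorem norm_smul_add_one_sub_smul_sq (x y : E) (t : ℝ) :
    ‖t • x + (1 - t) • y‖ ^ 2
      = t * ‖x‖ ^ 2 + (1 - t) * ‖y‖ ^ 2 - t * (1 - t) * ‖x - y‖ ^ 2 := by
  simp only [← real_inner_self_eq_norm_sq, inner_add_left, inner_add_right, inner_sub_left,
    inner_sub_right, real_inner_smul_left, real_inner_smul_right, real_inner_comm x y]
  ring

theorem WeaklyConvexE.le_coe (hg : WeaklyConvexE ρ g) {x y : E} {t : ℝ} (ha : g x = a)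
    (hb : g y = b) (ht₀ : 0 ≤ t) (ht₁ : t ≤ 1) :
    g (t • x + (1 - t) • y) ≤ ((t * a + (1 - t) * b
      + ρ / 2 * t * (1 - t) * ‖x - y‖ ^ 2 : ℝ) : EReal) := by
  have h := hg x y t ht₀ ht₁
  rw [ha, hb] at h
  rw [← (EReal.addLECancellable_coe (ρ / 2 * ‖t • x + (1 - t) • y‖ ^ 2)).add_le_add_iff_right]
  convert h using 1
  norm_cast
  rw [norm_smul_add_one_sub_smul_sq]
  ring_nf

theorem IsProxPoint.add_sq_le {w p q : E} (hg : WeaklyConvexE ρ g) (hp : IsProxPoint g γ w p)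
    (ha : g p = a) (hb : g q = b) :
    a + 1 / (2 * γ) * ‖p - w‖ ^ 2 + (1 / (2 * γ) - ρ / 2) * ‖q - p‖ ^ 2
      ≤ b + 1 / (2 * γ) * ‖q - w‖ ^ 2 := by
  set c := 1 / (2 * γ)
  -- compare `p` with the points `t • q + (1 - t) • p` of the segment, then let `t → 0`
  have hsegment : ∀ t ∈ Set.Ioo (0 : ℝ) 1,
      a + c * ‖p - w‖ ^ 2 + (1 - t) * ((c - ρ / 2) * ‖q - p‖ ^ 2)
        ≤ b + c * ‖q - w‖ ^ 2 := by
    rintro t ⟨ht₀, ht₁⟩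
    have hm := (hp (t • q + (1 - t) • p)).trans
      (add_le_add_left (hg.le_coe hb ha ht₀.le ht₁.le) _)
    rw [ha, ← EReal.coe_add, ← EReal.coe_add, EReal.coe_le_coe_iff,
      show t • q + (1 - t) • p - w = t • (q - w) + (1 - t) • (p - w) by module,
      norm_smul_add_one_sub_smul_sq, sub_sub_sub_cancel_right] at hm
    refine le_of_mul_le_mul_left ?_ ht₀
    nlinarith
  have hcont : Continuous fun t : ℝ =>
      a + c * ‖p - w‖ ^ 2 + (1 - t) * ((c - ρ / 2) * ‖q - p‖ ^ 2) := by
    fun_prop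
  exact le_of_tendsto ((hcont.tendsto' 0 _ (by ring)).mono_left nhdsWithin_le_nhds)
    (Filter.eventually_of_mem (Ioo_mem_nhdsGT one_pos) hsegment)

theorem IsProxPoint.mul_norm_sq_le_inner {w₁ w₂ p₁ p₂ : E} (hγ : 0 < γ) (hg : WeaklyConvexE ρ g)
    (hp₁ : IsProxPoint g γ w₁ p₁) (hp₂ : IsProxPoint g γ w₂ p₂) (ha : g p₁ = a) (hb : g p₂ = b) :
    (1 - γ * ρ) * ‖p₁ - p₂‖ ^ 2 ≤ ⟪p₁ - p₂, w₁ - w₂⟫ := by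
  have h₁ := hp₁.add_sq_le hg ha hb
  have h₂ := hp₂.add_sq_le hg hb ha
  have hfour : ‖p₂ - w₁‖ ^ 2 + ‖p₁ - w₂‖ ^ 2 - ‖p₁ - w₁‖ ^ 2 - ‖p₂ - w₂‖ ^ 2
      = 2 * ⟪p₁ - p₂, w₁ - w₂⟫ := by
    simp only [← real_inner_self_eq_norm_sq, inner_sub_left, inner_sub_right,
      real_inner_comm p₁, real_inner_comm p₂]
    ring
  rw [norm_sub_rev p₂ p₁] at h₁
  have hsum : (1 / (2 * γ) * 2 - ρ) * ‖p₁ - p₂‖ ^ 2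
      ≤ 1 / (2 * γ) * (2 * ⟪p₁ - p₂, w₁ - w₂⟫) := by
    rw [← hfour]; linarith
  calc (1 - γ * ρ) * ‖p₁ - p₂‖ ^ 2 = γ * ((1 / (2 * γ) * 2 - ρ) * ‖p₁ - p₂‖ ^ 2) := by
        field_simp
    _ ≤ γ * (1 / (2 * γ) * (2 * ⟪p₁ - p₂, w₁ - w₂⟫)) := by gcongr
    _ = ⟪p₁ - p₂, w₁ - w₂⟫ := by field_simp

theorem IsProxPoint.norm_sub_le {w₁ w₂ p₁ p₂ : E} (hγ : 0 < γ) (hγρ : γ * ρ < 1)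
    (hg : WeaklyConvexE ρ g)
    (hp₁ : IsProxPoint g γ w₁ p₁) (hp₂ : IsProxPoint g γ w₂ p₂) (ha : g p₁ = a) (hb : g p₂ = b) :
    ‖p₁ - p₂‖ ≤ (1 - γ * ρ)⁻¹ * ‖w₁ - w₂‖ := by
  have hκ : 0 < 1 - γ * ρ := by linarith
  rw [inv_mul_eq_div, le_div_iff₀ hκ]
  rcases (norm_nonneg (p₁ - p₂)).eq_or_lt with h0 | hpos
  · rw [← h0, zero_mul]; exact norm_nonneg _
  refine le_of_mul_le_mul_left ?_ hpos
  calc ‖p₁ - p₂‖ * (‖p₁ - p₂‖ * (1 - γ * ρ)) = (1 - γ * ρ) * ‖p₁ - p₂‖ ^ 2 := by ring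
    _ ≤ ⟪p₁ - p₂, w₁ - w₂⟫ := hp₁.mul_norm_sq_le_inner hγ hg hp₂ ha hb
    _ ≤ ‖p₁ - p₂‖ * ‖w₁ - w₂‖ := real_inner_le_norm _ _

theorem norm_sub_proxGrad_sub_le (hγ : 0 < γ) (hγρ : γ * ρ < 1) (hg : WeaklyConvexE ρ g)
    (hbot : ∀ x, g x ≠ ⊥) (hdom : ∃ x, g x ≠ ⊤) {G Y : E → E} {L : ℝ}
    (hG : ∀ x y, ‖G x - G y‖ ≤ L * ‖x - y‖) (hY : ∀ x, IsProxPoint g γ (x - γ • G x) (Y x))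
    (x₁ x₂ : E) :
    ‖(x₁ - Y x₁) - (x₂ - Y x₂)‖ ≤ (1 + (1 + γ * L) / (1 - γ * ρ)) * ‖x₁ - x₂‖ := by
  obtain ⟨a, ha⟩ := (hY x₁).exists_eq_coe hbot hdom
  obtain ⟨b, hb⟩ := (hY x₂).exists_eq_coe hbot hdom
  have hforward : ‖(x₁ - γ • G x₁) - (x₂ - γ • G x₂)‖ ≤ (1 + γ * L) * ‖x₁ - x₂‖ :=
    calc ‖(x₁ - γ • G x₁) - (x₂ - γ • G x₂)‖ = ‖(x₁ - x₂) - γ • (G x₁ - G x₂)‖ := by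
          congr 1; module
      _ ≤ ‖x₁ - x₂‖ + γ * ‖G x₁ - G x₂‖ := by
          rw [← norm_smul_of_nonneg hγ.le]; exact norm_sub_le _ _
      _ ≤ ‖x₁ - x₂‖ + γ * (L * ‖x₁ - x₂‖) := by gcongr; exact hG x₁ x₂
      _ = (1 + γ * L) * ‖x₁ - x₂‖ := by ring
  have hprox := (hY x₁).norm_sub_le hγ hγρ hg (hY x₂) ha hb
  calc ‖(x₁ - Y x₁) - (x₂ - Y x₂)‖ = ‖(x₁ - x₂) - (Y x₁ - Y x₂)‖ := by
        congr 1; abel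
    _ ≤ ‖x₁ - x₂‖ + (1 - γ * ρ)⁻¹ * ((1 + γ * L) * ‖x₁ - x₂‖) := by
        have : 0 ≤ (1 - γ * ρ)⁻¹ := inv_nonneg.2 (by linarith)
        grw [norm_sub_le, hprox, hforward]
    _ = (1 + (1 + γ * L) / (1 - γ * ρ)) * ‖x₁ - x₂‖ := by ring

end

section

variable {E : Type*} [NormedAddCommGroup E] [InnerProductSpace ℝ E] [CompleteSpace E]
variable {f g : E → ℝ} {f' g' x : E}

theorem HasGradientAt.add (hf : HasGradientAt f f' x) (hg : HasGradientAt g g' x) :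
    HasGradientAt (fun y => f y + g y) (f' + g') x := by
  rw [hasGradientAt_iff_hasFDerivAt, map_add]
  exact HasFDerivAt.add hf hg

theorem HasGradientAt.const_mul (hf : HasGradientAt f f' x) (c : ℝ) :
    HasGradientAt (fun y => c * f y) (c • f') x := by
  rw [hasGradientAt_iff_hasFDerivAt, map_smul]
  exact HasFDerivAt.const_mul hf c

theorem gradient_fun_add (hf : DifferentiableAt ℝ f x) (hg : DifferentiableAt ℝ g x) :
    gradient (fun y => f y + g y) x = gradient f x + gradient g x :=
  (hf.hasGradientAt.add hg.hasGradientAt).gradient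

theorem hasGradientAt_norm_sub_sq (w p : E) :
    HasGradientAt (fun u => ‖u - w‖ ^ 2) ((2 : ℝ) • (p - w)) p := by
  rw [hasGradientAt_iff_hasFDerivAt]
  refine ((hasFDerivAt_id p).sub_const w).norm_sq.congr_fderiv ?_
  ext v
  simp

theorem IsProxPoint.sub_eq_smul_gradient {γ : ℝ} {w p : E} (hγ : γ ≠ 0)
    (hf : DifferentiableAt ℝ f p) (hp : IsProxPoint (fun u => (f u : EReal)) γ w p) :
    w - p = γ • gradient f p := by
  have hmin : IsLocalMin (fun u => f u + 1 / (2 * γ) * ‖u - w‖ ^ 2) p :=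
    Filter.Eventually.of_forall (isProxPoint_coe_iff.1 hp)
  have hzero := hmin.hasFDerivAt_eq_zero
    (hf.hasGradientAt.add ((hasGradientAt_norm_sub_sq w p).const_mul _))
  rw [LinearIsometryEquiv.map_eq_zero_iff, smul_smul] at hzero
  linear_combination (norm := match_scalars <;> field_simp <;> ring) (-γ) • hzero

theorem convexOn_univ_of_inner_gradient_sub_nonneg {F : E → ℝ} {G : E → E}
    (hF : ∀ x, HasGradientAt F (G x) x) (hG : ∀ x y, 0 ≤ ⟪G x - G y, x - y⟫) :
    ConvexOn ℝ Set.univ F := by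
  refine ⟨convex_univ, fun x _ y _ a b ha hb hab => ?_⟩
  set l : ℝ → E := ⇑(AffineMap.lineMap (k := ℝ) y x)
  have hφ : ∀ t, HasDerivAt (F ∘ l) ⟪G (l t), x - y⟫ t := fun t => by
    simpa using (hF (l t)).hasFDerivAt.comp_hasDerivAt t AffineMap.hasDerivAt_lineMap
  have hmono : Monotone (deriv (F ∘ l)) := by
    intro s t hst
    have hlst : l t - l s = (t - s) • (x - y) := by
      simp only [l, AffineMap.lineMap_apply_module]; module
    have := hG (l t) (l s)
    rw [hlst, real_inner_smul_right, inner_sub_left] at this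
    simp only [(hφ _).deriv]
    rcases hst.eq_or_lt with rfl | hlt
    · rfl
    · nlinarith
  have hconv := hmono.convexOn_univ_of_deriv fun t => (hφ t).differentiableAt
  have h := hconv.2 (Set.mem_univ 1) (Set.mem_univ 0) ha hb hab
  have hla : l a = a • x + b • y := by
    rw [show l a = _ from AffineMap.lineMap_apply_module _ _ _, show 1 - a = b by linarith,
      add_comm]
  simpa [l, hla] using h

theorem weaklyConvexE_of_lipschitz_gradient {L : ℝ} (hf : Differentiable ℝ f)
    (hL : ∀ x y, ‖gradient f x - gradient f y‖ ≤ L * ‖x - y‖) :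
    WeaklyConvexE L (fun x => (f x : EReal)) := by
  have hF : ∀ x, HasGradientAt (fun y => f y + L / 2 * ‖y‖ ^ 2) (gradient f x + L • x) x :=
    fun x => by
      simpa [smul_smul] using
        (hf x).hasGradientAt.add ((hasGradientAt_norm_sub_sq 0 x).const_mul (L / 2))
  have hconv := convexOn_univ_of_inner_gradient_sub_nonneg hF fun x y => by
    have hcs := (abs_le.1 (abs_real_inner_le_norm (gradient f x - gradient f y) (x - y))).1
    have hLxy := mul_le_mul_of_nonneg_right (hL x y) (norm_nonneg (x - y))
    rw [show gradient f x + L • x - (gradient f y + L • y)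
        = (gradient f x - gradient f y) + L • (x - y) by module,
      inner_add_left, real_inner_smul_left, real_inner_self_eq_norm_sq]
    nlinarith
  intro x y t ht₀ ht₁
  have := hconv.2 (Set.mem_univ x) (Set.mem_univ y) ht₀ (sub_nonneg.2 ht₁) (by ring)
  dsimp only
  exact_mod_cast this

variable {Lf L γ lam : ℝ} {Y T : E → E}

theorem norm_relaxedPoint_sub_le (hflip : ∀ x y, ‖gradient f x - gradient f y‖ ≤ Lf * ‖x - y‖)
    (hR : ∀ x y, ‖(x - Y x) - (y - Y y)‖ ≤ L * ‖x - y‖) (hγ : 0 ≤ γ) (hlam : 0 ≤ lam)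
    (x₁ x₂ : E) :
    ‖((1 - lam) • x₁ + γ • gradient f x₁ + lam • Y x₁)
        - ((1 - lam) • x₂ + γ • gradient f x₂ + lam • Y x₂)‖
      ≤ (1 + γ * Lf + lam * L) * ‖x₁ - x₂‖ :=
  calc _ = ‖(x₁ - x₂) + γ • (gradient f x₁ - gradient f x₂)
          - lam • ((x₁ - Y x₁) - (x₂ - Y x₂))‖ := by congr 1; module
    _ ≤ ‖x₁ - x₂‖ + γ * ‖gradient f x₁ - gradient f x₂‖
          + lam * ‖(x₁ - Y x₁) - (x₂ - Y x₂)‖ := by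
        rw [← norm_smul_of_nonneg hγ, ← norm_smul_of_nonneg hlam]
        exact norm_sub_le_of_le (norm_add_le _ _) le_rfl
    _ ≤ ‖x₁ - x₂‖ + γ * (Lf * ‖x₁ - x₂‖) + lam * (L * ‖x₁ - x₂‖) := by
        gcongr
        exacts [hflip x₁ x₂, hR x₁ x₂]
    _ = (1 + γ * Lf + lam * L) * ‖x₁ - x₂‖ := by ring

theorem norm_sub_relaxedProx_sub_le (hLf : 0 ≤ Lf) (hfd : Differentiable ℝ f)
    (hflip : ∀ x y, ‖gradient f x - gradient f y‖ ≤ Lf * ‖x - y‖)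
    (hR : ∀ x y, ‖(x - Y x) - (y - Y y)‖ ≤ L * ‖x - y‖) (hγ : 0 < γ) (hγf : γ * Lf < 1)
    (hlam : 0 ≤ lam)
    (hT : ∀ x, IsProxPoint (fun u => (f u : EReal)) γ
      ((1 - lam) • x + γ • gradient f x + lam • Y x) (T x))
    (x₁ x₂ : E) :
    ‖(x₁ - T x₁) - (x₂ - T x₂)‖
      ≤ ((1 + γ * Lf + lam * L) * max 1 (γ * Lf / (1 - γ * Lf)) + lam * L + γ * Lf)
        * ‖x₁ - x₂‖ := by
  set S := (1 + γ * Lf + lam * L) * ‖x₁ - x₂‖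
  have hv := norm_relaxedPoint_sub_le hflip hR hγ.le hlam x₁ x₂
  have hT₁₂ : ‖T x₁ - T x₂‖ ≤ (1 - γ * Lf)⁻¹ * S :=
    ((hT x₁).norm_sub_le hγ hγf (weaklyConvexE_of_lipschitz_gradient hfd hflip) (hT x₂)
      rfl rfl).trans (mul_le_mul_of_nonneg_left hv (inv_nonneg.2 (by linarith)))
  have hS : 0 ≤ S := (norm_nonneg _).trans hv
  have hTterm : γ * (Lf * ‖T x₁ - T x₂‖) ≤ max 1 (γ * Lf / (1 - γ * Lf)) * S :=
    calc γ * (Lf * ‖T x₁ - T x₂‖) = γ * Lf * ‖T x₁ - T x₂‖ := by ring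
      _ ≤ γ * Lf * ((1 - γ * Lf)⁻¹ * S) := by gcongr
      _ = γ * Lf / (1 - γ * Lf) * S := by ring
      _ ≤ max 1 (γ * Lf / (1 - γ * Lf)) * S := by gcongr; exact le_max_right _ _
  have hstep : ∀ x, x - T x = lam • (x - Y x) - γ • (gradient f x - gradient f (T x)) := by
    intro x
    have := (hT x).sub_eq_smul_gradient hγ.ne' (hfd _)
    linear_combination (norm := module) this
  calc ‖(x₁ - T x₁) - (x₂ - T x₂)‖
      = ‖lam • ((x₁ - Y x₁) - (x₂ - Y x₂)) - γ • (gradient f x₁ - gradient f x₂)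
          + γ • (gradient f (T x₁) - gradient f (T x₂))‖ := by
        rw [hstep, hstep]; congr 1; module
    _ ≤ lam * ‖(x₁ - Y x₁) - (x₂ - Y x₂)‖ + γ * ‖gradient f x₁ - gradient f x₂‖
          + γ * ‖gradient f (T x₁) - gradient f (T x₂)‖ := by
        rw [← norm_smul_of_nonneg hlam, ← norm_smul_of_nonneg hγ.le,
          ← norm_smul_of_nonneg hγ.le]
        exact norm_add_le_of_le (norm_sub_le _ _) le_rfl
    _ ≤ lam * (L * ‖x₁ - x₂‖) + γ * (Lf * ‖x₁ - x₂‖) + γ * (Lf * ‖T x₁ - T x₂‖) := by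
        gcongr
        exacts [hR x₁ x₂, hflip x₁ x₂, hflip _ _]
    _ ≤ lam * (L * ‖x₁ - x₂‖) + γ * (Lf * ‖x₁ - x₂‖) + max 1 (γ * Lf / (1 - γ * Lf)) * S := by
        grw [hTterm]
    _ = _ := by ring

end

theorem id_sub_T_lipschitz_general
    {E : Type*} [NormedAddCommGroup E] [InnerProductSpace ℝ E] [FiniteDimensional ℝ E]
    (f h : E → ℝ) (g : E → EReal) (Lf Lh ρ : ℝ)
    (hLf : 0 ≤ Lf)
    (hfd : Differentiable ℝ f)
    (hflip : ∀ x y : E, ‖gradient f x - gradient f y‖ ≤ Lf * ‖x - y‖)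
    (hhd : Differentiable ℝ h)
    (hhlip : ∀ x y : E, ‖gradient h x - gradient h y‖ ≤ Lh * ‖x - y‖)
    (hgtop : ∃ x, g x ≠ ⊤) (hgbot : ∀ x, g x ≠ ⊥)
    (hwc : WeaklyConvexE ρ g)
    (γ lam : ℝ) (hγ0 : 0 < γ) (hγρ : γ * ρ < 1) (hγf : γ * Lf < 1) (hlam : 0 < lam)
    (Y T : E → E)
    (hY : ∀ x : E, ∀ w : E,
      g (Y x) + ((1 / (2 * γ) *
        ‖Y x - (x - γ • gradient (fun v => f v + h v) x)‖ ^ 2 : ℝ) : EReal) ≤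
      g w + ((1 / (2 * γ) *
        ‖w - (x - γ • gradient (fun v => f v + h v) x)‖ ^ 2 : ℝ) : EReal))
    (hT : ∀ x : E, ∀ u : E,
      f (T x) + 1 / (2 * γ) *
        ‖T x - ((1 - lam) • x + γ • gradient f x + lam • Y x)‖ ^ 2 ≤
      f u + 1 / (2 * γ) *
        ‖u - ((1 - lam) • x + γ • gradient f x + lam • Y x)‖ ^ 2)
    (L₁ L₂ : ℝ)
    (hL₁ : L₁ = 1 + (1 + γ * (Lf + Lh)) / (1 - γ * ρ))
    (hL₂ : L₂ = (1 + γ * Lf + lam * L₁) * max 1 (γ * Lf / (1 - γ * Lf))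
      + lam * L₁ + γ * Lf) :
    ∀ x₁ x₂ : E, ‖(x₁ - T x₁) - (x₂ - T x₂)‖ ≤ L₂ * ‖x₁ - x₂‖ := by
  have hgradLip : ∀ x y, ‖(gradient f x + gradient h x) - (gradient f y + gradient h y)‖
      ≤ (Lf + Lh) * ‖x - y‖ := fun x y => by
    rw [add_sub_add_comm, add_mul]
    exact norm_add_le_of_le (hflip x y) (hhlip x y)
  have hYprox : ∀ x, IsProxPoint g γ (x - γ • (gradient f x + gradient h x)) (Y x) :=
    fun x u => by simpa only [gradient_fun_add (hfd x) (hhd x)] using hY x u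
  have hR : ∀ x y, ‖(x - Y x) - (y - Y y)‖ ≤ L₁ * ‖x - y‖ :=
    hL₁ ▸ norm_sub_proxGrad_sub_le hγ0 hγρ hwc hgbot hgtop hgradLip hYprox
  rw [hL₂]
  exact norm_sub_relaxedProx_sub_le hLf hfd hflip hR hγ0 hγf hlam.le
    fun x => isProxPoint_coe_iff.2 (hT x)

theorem id_sub_T_lipschitz
    {E : Type*} [NormedAddCommGroup E] [InnerProductSpace ℝ E] [FiniteDimensional ℝ E]
    (f h : E → ℝ) (g : E → EReal) (Lf Lh ρ : ℝ)
    (hLf : 0 ≤ Lf) (hLh : 0 ≤ Lh) (hρ : 0 ≤ ρ)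
    (hfd : Differentiable ℝ f)
    (hflip : ∀ x y : E, ‖gradient f x - gradient f y‖ ≤ Lf * ‖x - y‖)
    (hhd : Differentiable ℝ h)
    (hhlip : ∀ x y : E, ‖gradient h x - gradient h y‖ ≤ Lh * ‖x - y‖)
    (hgtop : ∃ x, g x ≠ ⊤) (hgbot : ∀ x, g x ≠ ⊥)
    (hglsc : LowerSemicontinuous g)
    (hwc : WeaklyConvexE ρ g)
    (γ lam : ℝ) (hγ0 : 0 < γ) (hγρ : γ * ρ < 1) (hγf : γ * Lf < 1) (hlam : 0 < lam)
    (Y T : E → E)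
    (hY : ∀ x : E, ∀ w : E,
      g (Y x) + ((1 / (2 * γ) *
        ‖Y x - (x - γ • gradient (fun v => f v + h v) x)‖ ^ 2 : ℝ) : EReal) ≤
      g w + ((1 / (2 * γ) *
        ‖w - (x - γ • gradient (fun v => f v + h v) x)‖ ^ 2 : ℝ) : EReal))
    (hT : ∀ x : E, ∀ u : E,
      f (T x) + 1 / (2 * γ) *
        ‖T x - ((1 - lam) • x + γ • gradient f x + lam • Y x)‖ ^ 2 ≤
      f u + 1 / (2 * γ) *
        ‖u - ((1 - lam) • x + γ • gradient f x + lam • Y x)‖ ^ 2)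
    (L₁ L₂ : ℝ)
    (hL₁ : L₁ = 1 + (1 + γ * (Lf + Lh)) / (1 - γ * ρ))
    (hL₂ : L₂ = (1 + γ * Lf + lam * L₁) * max 1 (γ * Lf / (1 - γ * Lf))
      + lam * L₁ + γ * Lf) :
    ∀ x₁ x₂ : E, ‖(x₁ - T x₁) - (x₂ - T x₂)‖ ≤ L₂ * ‖x₁ - x₂‖ :=
  id_sub_T_lipschitz_general f h g Lf Lh ρ hLf hfd hflip hhd hhlip hgtop hgbot hwc γ lam hγ0 hγρ hγf
    hlam Y T hY hT L₁ L₂ hL₁ hL₂
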